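/- Let 0 < α < d, 1 < p < q < d/α, and x ∈ ℓ^p_q(ℤ^d). There exists a constant C > 0 (independent of x and k) such that for every k ∈ ℤ^d and every real r ≥ 1, |I_α x(k)| ≤ C (r^α Mx(k) + r^{α − d/q} ‖x‖_{ℓ^p_q(ℤ^d)}), where I_α x(k) = Σ_{i ≠ k} x(i)/‖k−i‖_∞^{d−α}. -/

import Mathlib

open scoped BigOperators ENNReal

noncomputable section

/-- The discrete cube `S_{m,N} = {k : ‖k - m‖_∞ ≤ N}` in `ℤ^d`. -/
def cubeS (d : ℕ) (m : Fin d → ℤ) (N : ℕ) : Finset (Fin d → ℤ) :=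
  Finset.Icc (fun i => m i - N) (fun i => m i + N)

/-- `R_{m,N}`: the cube `S_{m,N}` with points having some coordinate `m i + N` removed. -/
def cubeR (d : ℕ) (m : Fin d → ℤ) (N : ℕ) : Finset (Fin d → ℤ) :=
  Finset.Ico (fun i => m i - N) (fun i => m i + N)

/-- The sup-norm `‖k‖_∞` of a point of `ℤ^d`, as a natural number. -/
def snorm' (d : ℕ) (k : Fin d → ℤ) : ℕ :=
  Finset.univ.sup fun i => (k i).natAbs

/-- The (centered, odd) discrete Hardy–Littlewood maximal operator. -/
def maxOp (d : ℕ) (x : (Fin d → ℤ) → ℝ) (m : Fin d → ℤ) : ℝ :=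
  ⨆ N : ℕ, (∑ k ∈ cubeS d m N, |x k|) / (2 * N + 1) ^ d

/-- The discrete Morrey norm `‖x‖_{ℓ^p_q(ℤ^d)}`. -/
def morreyNorm (d : ℕ) (p q : ℝ) (x : (Fin d → ℤ) → ℝ) : ℝ :=
  ⨆ mN : (Fin d → ℤ) × ℕ,
    (((2 * mN.2 + 1 : ℝ) ^ d) ^ (1 / q - 1 / p)) *
      (∑ k ∈ cubeS d mN.1 mN.2, |x k| ^ p) ^ (1 / p)

/-- Membership in the discrete Morrey space: the defining supremum is finite. -/
def MemMorrey (d : ℕ) (p q : ℝ) (x : (Fin d → ℤ) → ℝ) : Prop :=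
  BddAbove (Set.range fun mN : (Fin d → ℤ) × ℕ =>
    (((2 * mN.2 + 1 : ℝ) ^ d) ^ (1 / q - 1 / p)) *
      (∑ k ∈ cubeS d mN.1 mN.2, |x k| ^ p) ^ (1 / p))

/-- The discrete Riesz potential `I_α x (k) = ∑_{i ≠ k} x i / ‖k - i‖_∞^{d - α}`. -/
def rieszPot (d : ℕ) (α : ℝ) (x : (Fin d → ℤ) → ℝ) (k : Fin d → ℤ) : ℝ :=
  ∑' i : {i : Fin d → ℤ // i ≠ k}, x i / (snorm' d (k - i) : ℝ) ^ ((d : ℝ) - α)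

/-! Split the sum over `i ≠ k` into the dyadic shells `2 ^ j ≤ ‖k - i‖_∞ < 2 ^ (j + 1)`. The
`j`-th shell contributes at most `(2 ^ j) ^ (α - d)` times the mass of `|x|` on the cube of
radius `2 ^ (j + 1)` around `k`; that mass is at most `5 ^ d (2 ^ j) ^ d Mx(k)`, and also, by
Hölder's inequality and the Morrey condition, at most `5 ^ d (2 ^ j) ^ (d (1 - 1 / q)) ‖x‖`.
Using the first bound for `2 ^ j ≤ r` and the second beyond leaves two geometric series, of
sizes `r ^ α Mx(k)` and `r ^ (α - d / q) ‖x‖`. -/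

open Finset

lemma card_cubeS (d : ℕ) (m : Fin d → ℤ) (N : ℕ) : #(cubeS d m N) = (2 * N + 1) ^ d := by
  have h : ∀ t, #(Icc (m t - N) (m t + N)) = 2 * N + 1 := fun t => by
    rw [Int.card_Icc]; omega
  simp [cubeS, Pi.card_Icc, h]

lemma mem_cubeS_iff {d : ℕ} {m i : Fin d → ℤ} {N : ℕ} :
    i ∈ cubeS d m N ↔ snorm' d (m - i) ≤ N := by
  simp only [cubeS, snorm', mem_Icc, Finset.sup_le_iff, mem_univ, true_implies, Pi.le_def,
    Pi.sub_apply]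
  refine ⟨fun h t => ?_, fun h => ⟨fun t => ?_, fun t => ?_⟩⟩ <;>
    grind

section Averages

variable {d : ℕ} {p q : ℝ} {x : (Fin d → ℤ) → ℝ}

lemma morreyNorm_nonneg (hx : MemMorrey d p q x) : 0 ≤ morreyNorm d p q x :=
  (by positivity : (0 : ℝ) ≤ _).trans (le_ciSup hx (0, 0))

lemma sum_abs_cubeS_le_morreyNorm (hp : 1 ≤ p) (hx : MemMorrey d p q x)
    (m : Fin d → ℤ) (N : ℕ) :
    ∑ i ∈ cubeS d m N, |x i| ≤ ((2 * N + 1 : ℝ) ^ d) ^ (1 - 1 / q) * morreyNorm d p q x := by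
  set V : ℝ := (2 * N + 1) ^ d
  have hV : 0 < V := by positivity
  have hcard : (#(cubeS d m N) : ℝ) = V := by simp [V, card_cubeS]
  have hp0 : 0 < p := by linarith
  have holder : ∑ i ∈ cubeS d m N, |x i| ≤
      V ^ (1 - 1 / p) * (∑ i ∈ cubeS d m N, |x i| ^ p) ^ (1 / p) := by
    have h := Real.rpow_le_rpow (by positivity)
      (Real.rpow_sum_le_const_mul_sum_rpow (cubeS d m N) x hp) (one_div_nonneg.2 hp0.le)
    rwa [← Real.rpow_mul (by positivity), mul_one_div_cancel hp0.ne', Real.rpow_one,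
      Real.mul_rpow (by positivity) (by positivity), hcard, ← Real.rpow_mul hV.le,
      sub_mul, one_mul, mul_one_div_cancel hp0.ne'] at h
  have morrey : V ^ (1 / q - 1 / p) * (∑ i ∈ cubeS d m N, |x i| ^ p) ^ (1 / p) ≤
      morreyNorm d p q x :=
    le_ciSup hx (m, N)
  calc ∑ i ∈ cubeS d m N, |x i|
      ≤ V ^ (1 - 1 / q) * (V ^ (1 / q - 1 / p) * (∑ i ∈ cubeS d m N, |x i| ^ p) ^ (1 / p)) := by
        rwa [← mul_assoc, ← Real.rpow_add hV, sub_add_sub_cancel]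
    _ ≤ V ^ (1 - 1 / q) * morreyNorm d p q x := by gcongr

lemma bddAbove_average_cubeS (hp : 1 ≤ p) (hq : 0 < q) (hx : MemMorrey d p q x)
    (m : Fin d → ℤ) :
    BddAbove (Set.range fun N : ℕ => (∑ i ∈ cubeS d m N, |x i|) / (2 * N + 1 : ℝ) ^ d) := by
  refine ⟨morreyNorm d p q x, ?_⟩
  rintro _ ⟨N, rfl⟩
  have hV : (1 : ℝ) ≤ (2 * N + 1) ^ d := one_le_pow₀ (by linarith [N.cast_nonneg (α := ℝ)])
  rw [div_le_iff₀ (by positivity), mul_comm]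
  calc ∑ i ∈ cubeS d m N, |x i|
      ≤ ((2 * N + 1 : ℝ) ^ d) ^ (1 - 1 / q) * morreyNorm d p q x :=
        sum_abs_cubeS_le_morreyNorm hp hx m N
    _ ≤ ((2 * N + 1 : ℝ) ^ d) ^ (1 : ℝ) * morreyNorm d p q x := by
        gcongr
        · exact morreyNorm_nonneg hx
        · linarith [one_div_pos.2 hq]
    _ = (2 * N + 1 : ℝ) ^ d * morreyNorm d p q x := by rw [Real.rpow_one]

lemma maxOp_nonneg {m : Fin d → ℤ}
    (hM : BddAbove (Set.range fun N : ℕ => (∑ i ∈ cubeS d m N, |x i|) / (2 * N + 1 : ℝ) ^ d)) :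
    0 ≤ maxOp d x m :=
  (by positivity : (0 : ℝ) ≤ _).trans (le_ciSup hM 0)

lemma sum_abs_cubeS_le_maxOp {m : Fin d → ℤ}
    (hM : BddAbove (Set.range fun N : ℕ => (∑ i ∈ cubeS d m N, |x i|) / (2 * N + 1 : ℝ) ^ d))
    (N : ℕ) :
    ∑ i ∈ cubeS d m N, |x i| ≤ (2 * N + 1 : ℝ) ^ d * maxOp d x m := by
  rw [← div_le_iff₀' (by positivity)]
  exact le_ciSup hM N

end Averages

lemma abs_div_natCast_rpow_le (y : ℝ) (n : ℕ) {s : ℝ} (hs : 0 < s) :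
    |y / (n : ℝ) ^ s| ≤ ((2 : ℝ) ^ Nat.log 2 n) ^ (-s) * |y| := by
  rcases eq_or_ne n 0 with rfl | hn
  · simp [Real.zero_rpow hs.ne']
  have hpow : ((2 ^ Nat.log 2 n : ℕ) : ℝ) ≤ n := by exact_mod_cast Nat.pow_log_le_self 2 hn
  push_cast at hpow
  rw [abs_div, abs_of_nonneg (Real.rpow_nonneg n.cast_nonneg s), div_eq_mul_inv,
    ← Real.rpow_neg (by positivity), mul_comm]
  exact mul_le_mul_of_nonneg_right
    (Real.rpow_le_rpow_of_nonpos (by positivity) hpow (neg_nonpos.2 hs.le)) (abs_nonneg y)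

lemma tsum_ofReal_mul_le_of_mem_fiber {ι : Type*} (g : ι → ℕ) (t : ℕ → Finset ι)
    (hg : ∀ i, i ∈ t (g i)) {c : ℕ → ℝ} (hc : ∀ j, 0 ≤ c j) {f : ι → ℝ} (hf : ∀ i, 0 ≤ f i) :
    ∑' i, ENNReal.ofReal (c (g i) * f i) ≤ ∑' j, ENNReal.ofReal (c j * ∑ i ∈ t j, f i) := by
  rw [← ENNReal.tsum_fiberwise _ g]
  refine ENNReal.tsum_le_tsum fun j => ?_
  calc ∑' i : g ⁻¹' {j}, ENNReal.ofReal (c (g i) * f i)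
      = ∑' i : g ⁻¹' {j}, ENNReal.ofReal (c j) * ENNReal.ofReal (f i) :=
        tsum_congr fun i => by rw [show g i = j from i.2, ENNReal.ofReal_mul (hc j)]
    _ = ENNReal.ofReal (c j) * ∑' i : g ⁻¹' {j}, ENNReal.ofReal (f i) := ENNReal.tsum_mul_left
    _ ≤ ENNReal.ofReal (c j) * ∑' i : (t j : Set ι), ENNReal.ofReal (f i) := by
        gcongr
        exact ENNReal.tsum_mono_subtype (fun i => ENNReal.ofReal (f i))
          fun i (hi : g i = j) => hi ▸ hg i
    _ = ENNReal.ofReal (c j * ∑ i ∈ t j, f i) := by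
        rw [Finset.tsum_subtype' (t j) fun i => ENNReal.ofReal (f i),
          ← ENNReal.ofReal_sum_of_nonneg fun i _ => hf i, ENNReal.ofReal_mul (hc j)]

lemma enorm_rieszPot_le {d : ℕ} {α : ℝ} (hαd : α < d) (x : (Fin d → ℤ) → ℝ)
    (k : Fin d → ℤ) :
    ‖rieszPot d α x k‖ₑ ≤
      ∑' j : ℕ,
        ENNReal.ofReal (((2 : ℝ) ^ j) ^ (α - d) * ∑ i ∈ cubeS d k (2 ^ (j + 1)), |x i|) := by
  have hs : 0 < (d : ℝ) - α := sub_pos.2 hαd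
  calc ‖rieszPot d α x k‖ₑ
      ≤ ∑' i : {i // i ≠ k}, ‖x i / (snorm' d (k - i) : ℝ) ^ ((d : ℝ) - α)‖ₑ :=
        enorm_tsum_le_tsum_enorm
    _ ≤ ∑' i, ‖x i / (snorm' d (k - i) : ℝ) ^ ((d : ℝ) - α)‖ₑ :=
        ENNReal.tsum_comp_le_tsum_of_injective Subtype.val_injective _
    _ ≤ ∑' i, ENNReal.ofReal (((2 : ℝ) ^ Nat.log 2 (snorm' d (k - i))) ^ (α - d) * |x i|) :=
        ENNReal.tsum_le_tsum fun i => by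
          rw [Real.enorm_eq_ofReal_abs, show α - d = -((d : ℝ) - α) by ring]
          exact ENNReal.ofReal_le_ofReal (abs_div_natCast_rpow_le _ _ hs)
    _ ≤ _ :=
        tsum_ofReal_mul_le_of_mem_fiber (fun i => Nat.log 2 (snorm' d (k - i)))
          (fun j => cubeS d k (2 ^ (j + 1)))
          (fun i => mem_cubeS_iff.2 (Nat.lt_pow_succ_log_self one_lt_two _).le)
          (fun j => by positivity) (fun i => abs_nonneg (x i))

lemma tsum_ofReal_le_of_le_geometric {u : ℕ → ℝ} {A B a b : ℝ} (hu : ∀ j, 0 ≤ u j)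
    (ha : 1 < a) (hb₀ : 0 ≤ b) (hb₁ : b < 1) (hA : ∀ j, u j ≤ A * a ^ j)
    (hB : ∀ j, u j ≤ B * b ^ j) (J : ℕ) :
    ∑' j, ENNReal.ofReal (u j) ≤ ENNReal.ofReal (A * a ^ J / (a - 1) + B * b ^ J / (1 - b)) := by
  have hgeom := summable_geometric_of_lt_one hb₀ hb₁
  have hsum : Summable u := (hgeom.mul_left B).of_nonneg_of_le hu hB
  have hA₀ : 0 ≤ A := by simpa using (hu 0).trans (hA 0)
  rw [← ENNReal.ofReal_tsum_of_nonneg hu hsum, ← hsum.sum_add_tsum_nat_add J]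
  refine ENNReal.ofReal_le_ofReal (add_le_add ?_ ?_)
  · calc ∑ j ∈ range J, u j
        ≤ ∑ j ∈ range J, A * a ^ j := sum_le_sum fun j _ => hA j
      _ = A * (a ^ J - 1) / (a - 1) := by rw [← mul_sum, geom_sum_eq ha.ne', mul_div_assoc]
      _ ≤ A * a ^ J / (a - 1) := by gcongr; linarith
  · calc ∑' j, u (j + J)
        ≤ ∑' j, B * b ^ J * b ^ j :=
          ((summable_nat_add_iff J).2 hsum).tsum_le_tsum
            (fun j => (hB _).trans_eq (by rw [pow_add]; ring)) (hgeom.mul_left _)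
      _ = B * b ^ J / (1 - b) := by
          rw [tsum_mul_left, tsum_geometric_of_lt_one hb₀ hb₁, div_eq_mul_inv]

lemma exists_tsum_ofReal_le_of_dyadic_bounds {a b : ℝ} (ha : 0 < a) (hb : b < 0) :
    ∃ C > 0, ∀ (u : ℕ → ℝ) (A B r : ℝ), (∀ j, 0 ≤ u j) →
      (∀ j, u j ≤ A * ((2 : ℝ) ^ j) ^ a) → (∀ j, u j ≤ B * ((2 : ℝ) ^ j) ^ b) → 1 ≤ r →
      ∑' j, ENNReal.ofReal (u j) ≤ ENNReal.ofReal (C * (A * r ^ a + B * r ^ b)) := by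
  have h2a : 1 < (2 : ℝ) ^ a := Real.one_lt_rpow one_lt_two ha
  have h2b : (2 : ℝ) ^ b < 1 := Real.rpow_lt_one_of_one_lt_of_neg one_lt_two hb
  have hc₁ : 0 < 1 / ((2 : ℝ) ^ a - 1) := one_div_pos.2 (sub_pos.2 h2a)
  have hc₂ : 0 < (2 : ℝ) ^ (-b) / (1 - (2 : ℝ) ^ b) := by
    have := sub_pos.2 h2b
    positivity
  refine ⟨1 / ((2 : ℝ) ^ a - 1) + (2 : ℝ) ^ (-b) / (1 - (2 : ℝ) ^ b), add_pos hc₁ hc₂, ?_⟩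
  intro u A B r hu hA hB hr
  have hpow (c : ℝ) (j : ℕ) : ((2 : ℝ) ^ j) ^ c = ((2 : ℝ) ^ c) ^ j :=
    (Real.rpow_pow_comm zero_le_two c j).symm
  simp only [hpow] at hA hB
  have hA₀ : 0 ≤ A := by simpa using (hu 0).trans (hA 0)
  have hB₀ : 0 ≤ B := by simpa using (hu 0).trans (hB 0)
  -- `J` is the dyadic scale of `r`: `2 ^ J ≤ r < 2 ^ (J + 1)`.
  set J := Nat.log 2 ⌊r⌋₊
  have hfloor : ⌊r⌋₊ ≠ 0 := (Nat.floor_pos.2 hr).ne'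
  have hJr : (2 : ℝ) ^ J ≤ r := by
    calc (2 : ℝ) ^ J = ((2 ^ J : ℕ) : ℝ) := by push_cast; rfl
      _ ≤ ⌊r⌋₊ := Nat.cast_le.2 (Nat.pow_log_le_self 2 hfloor)
      _ ≤ r := Nat.floor_le (by linarith)
  have hrJ : r / 2 ≤ (2 : ℝ) ^ J := by
    have h : ⌊r⌋₊ + 1 ≤ 2 ^ (J + 1) := Nat.lt_pow_succ_log_self one_lt_two _
    have h' : ((⌊r⌋₊ + 1 : ℕ) : ℝ) ≤ ((2 ^ (J + 1) : ℕ) : ℝ) := Nat.cast_le.2 h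
    push_cast at h'
    linarith [Nat.lt_floor_add_one r, pow_succ (2 : ℝ) J]
  have hA' : ((2 : ℝ) ^ a) ^ J ≤ r ^ a := by
    rw [← hpow]; exact Real.rpow_le_rpow (by positivity) hJr ha.le
  have hB' : ((2 : ℝ) ^ b) ^ J ≤ (2 : ℝ) ^ (-b) * r ^ b := by
    calc ((2 : ℝ) ^ b) ^ J = ((2 : ℝ) ^ J) ^ b := (hpow b J).symm
      _ ≤ (r / 2) ^ b := Real.rpow_le_rpow_of_nonpos (by positivity) hrJ hb.le
      _ = (2 : ℝ) ^ (-b) * r ^ b := by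
          rw [Real.div_rpow (by linarith) zero_le_two, Real.rpow_neg zero_le_two]; ring
  refine (tsum_ofReal_le_of_le_geometric hu h2a (by positivity) h2b hA hB J).trans
    (ENNReal.ofReal_le_ofReal ?_)
  have hX : 0 ≤ A * r ^ a := by positivity
  have hY : 0 ≤ B * r ^ b := by positivity
  calc A * ((2 : ℝ) ^ a) ^ J / ((2 : ℝ) ^ a - 1) + B * ((2 : ℝ) ^ b) ^ J / (1 - (2 : ℝ) ^ b)
      ≤ A * r ^ a / ((2 : ℝ) ^ a - 1) + B * ((2 : ℝ) ^ (-b) * r ^ b) / (1 - (2 : ℝ) ^ b) := by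
        gcongr
    _ = 1 / ((2 : ℝ) ^ a - 1) * (A * r ^ a) +
          (2 : ℝ) ^ (-b) / (1 - (2 : ℝ) ^ b) * (B * r ^ b) := by ring
    _ ≤ _ := by nlinarith [mul_nonneg hc₁.le hY, mul_nonneg hc₂.le hX]

section DyadicCubes

variable {d : ℕ} {x : (Fin d → ℤ) → ℝ}

lemma card_cubeS_two_pow_succ_le (d j : ℕ) :
    (2 * ((2 ^ (j + 1) : ℕ) : ℝ) + 1) ^ d ≤ 5 ^ d * ((2 : ℝ) ^ j) ^ d := by
  rw [← mul_pow]
  gcongr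
  push_cast
  linarith [one_le_pow₀ (M₀ := ℝ) (n := j) one_le_two, pow_succ (2 : ℝ) j]

lemma rpow_mul_sum_abs_cubeS_le_maxOp {k : Fin d → ℤ}
    (hM : BddAbove (Set.range fun N : ℕ => (∑ i ∈ cubeS d k N, |x i|) / (2 * N + 1 : ℝ) ^ d))
    (j : ℕ) (s : ℝ) :
    ((2 : ℝ) ^ j) ^ s * ∑ i ∈ cubeS d k (2 ^ (j + 1)), |x i| ≤
      5 ^ d * maxOp d x k * ((2 : ℝ) ^ j) ^ (s + d) := by
  rw [Real.rpow_add (by positivity), Real.rpow_natCast]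
  calc ((2 : ℝ) ^ j) ^ s * ∑ i ∈ cubeS d k (2 ^ (j + 1)), |x i|
      ≤ ((2 : ℝ) ^ j) ^ s * ((5 ^ d * ((2 : ℝ) ^ j) ^ d) * maxOp d x k) := by
        gcongr
        exact (sum_abs_cubeS_le_maxOp hM _).trans
          (mul_le_mul_of_nonneg_right (card_cubeS_two_pow_succ_le d j) (maxOp_nonneg hM))
    _ = _ := by ring

lemma rpow_mul_sum_abs_cubeS_le_morreyNorm {p q : ℝ} (hp : 1 ≤ p) (hq : 1 ≤ q)
    (hx : MemMorrey d p q x) (k : Fin d → ℤ) (j : ℕ) (s : ℝ) :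
    ((2 : ℝ) ^ j) ^ s * ∑ i ∈ cubeS d k (2 ^ (j + 1)), |x i| ≤
      5 ^ d * morreyNorm d p q x * ((2 : ℝ) ^ j) ^ (s + d * (1 - 1 / q)) := by
  have he₀ : 0 ≤ 1 - 1 / q := by rw [sub_nonneg, div_le_one (by linarith)]; exact hq
  have he₁ : 1 - 1 / q ≤ 1 := by linarith [one_div_pos.2 (show 0 < q by linarith)]
  have hvol : ((2 * ((2 ^ (j + 1) : ℕ) : ℝ) + 1) ^ d) ^ (1 - 1 / q) ≤
      5 ^ d * ((2 : ℝ) ^ j) ^ ((d : ℝ) * (1 - 1 / q)) := by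
    calc ((2 * ((2 ^ (j + 1) : ℕ) : ℝ) + 1) ^ d) ^ (1 - 1 / q)
        ≤ (5 ^ d * ((2 : ℝ) ^ j) ^ d) ^ (1 - 1 / q) := by
          gcongr; exact card_cubeS_two_pow_succ_le d j
      _ = ((5 : ℝ) ^ d) ^ (1 - 1 / q) * ((2 : ℝ) ^ j) ^ ((d : ℝ) * (1 - 1 / q)) := by
        rw [Real.mul_rpow (by positivity) (by positivity), ← Real.rpow_natCast ((2 : ℝ) ^ j),
          ← Real.rpow_mul (by positivity)]
      _ ≤ ((5 : ℝ) ^ d) ^ (1 : ℝ) * ((2 : ℝ) ^ j) ^ ((d : ℝ) * (1 - 1 / q)) := by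
        gcongr; exact one_le_pow₀ (by norm_num)
      _ = 5 ^ d * ((2 : ℝ) ^ j) ^ ((d : ℝ) * (1 - 1 / q)) := by rw [Real.rpow_one]
  rw [Real.rpow_add (by positivity)]
  calc ((2 : ℝ) ^ j) ^ s * ∑ i ∈ cubeS d k (2 ^ (j + 1)), |x i|
      ≤ ((2 : ℝ) ^ j) ^ s *
          ((5 ^ d * ((2 : ℝ) ^ j) ^ ((d : ℝ) * (1 - 1 / q))) * morreyNorm d p q x) := by
        gcongr
        exact (sum_abs_cubeS_le_morreyNorm hp hx _ _).trans
          (mul_le_mul_of_nonneg_right hvol (morreyNorm_nonneg hx))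
    _ = _ := by ring

end DyadicCubes

/-- the key pointwise estimate for the discrete Riesz potential. -/
theorem riesz_pointwise_estimate (d : ℕ) (α p q : ℝ) (hα : 0 < α) (hαd : α < d)
    (hp : 1 < p) (hpq : p < q) (hq : q < d / α)
    (x : (Fin d → ℤ) → ℝ) (hx : MemMorrey d p q x) :
    ∃ C : ℝ, 0 < C ∧ ∀ (k : Fin d → ℤ) (r : ℝ), 1 ≤ r →
      |rieszPot d α x k| ≤
        C * (r ^ α * maxOp d x k + r ^ (α - d / q) * morreyNorm d p q x) := by
  have hq₀ : 0 < q := by linarith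
  have hexp : α - d / q < 0 := by
    rw [lt_div_iff₀ hα] at hq
    rw [sub_neg, lt_div_iff₀ hq₀]
    linarith
  obtain ⟨C, hC, hdyadic⟩ := exists_tsum_ofReal_le_of_dyadic_bounds hα hexp
  refine ⟨5 ^ d * C, by positivity, fun k r hr => ?_⟩
  have hM := bddAbove_average_cubeS hp.le hq₀ hx k
  have hM₀ := maxOp_nonneg hM
  have hX₀ := morreyNorm_nonneg hx
  have key := (enorm_rieszPot_le hαd x k).trans <|
    hdyadic _ (5 ^ d * maxOp d x k) (5 ^ d * morreyNorm d p q x) r (fun j => by positivity)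
      (fun j => by simpa using rpow_mul_sum_abs_cubeS_le_maxOp hM j (α - d))
      (fun j => by
        convert rpow_mul_sum_abs_cubeS_le_morreyNorm hp.le (by linarith) hx k j (α - d) using 3
        ring) hr
  rw [Real.enorm_eq_ofReal_abs, ENNReal.ofReal_le_ofReal_iff (by positivity)] at key
  linarith
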